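/- Let G be a finite simple graph with no isolated vertices that is (H1, H2, C6)-free and satisfies γt(G) = 2γ(G). Then G has a unique minimum dominating set if and only if no special vertex of G has a true twin other than itself. -/

import Mathlib

/-!
When `γₜ(G) = 2γ(G)`, a γ-set `D` together with one neighbour of each of its vertices is a minimum
total dominating set. So the blocks `N[r]` of a part `R ⊆ D` can never be totally dominated by fewer
than `2|R|` vertices while the other vertices of `D` keep their partners. Cheap covers of this kind
show that γ-sets are packings and that a special vertex is a true twin of the centre of its block.
Excluding `H₁`, `H₂` and `C₆` makes the sets `N(μ) ∩ N(σ)`, `μ ∈ N(v)`, a chain for distinct centres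
`v` and `σ`, so one neighbour of `σ` serves all of them; this yields a cheap cover unless `v` is
special. Hence every γ-set consists of one vertex from each true-twin class of special vertices,
and any of its vertices can be swapped for a twin.
-/

open SimpleGraph

namespace TotalDom

variable {V : Type*}

/-- The closed neighborhood `N[v]` of a vertex. -/
def cnbr (G : SimpleGraph V) (v : V) : Set V := insert v (G.neighborSet v)

/-- `S` is a dominating set: every vertex outside `S` has a neighbor in `S`. -/
def IsDomSet (G : SimpleGraph V) (S : Set V) : Prop := ∀ v ∉ S, ∃ u ∈ S, G.Adj u v

/-- `S` is a total dominating set: every vertex has a neighbor in `S`. -/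
def IsTotalDomSet (G : SimpleGraph V) (S : Set V) : Prop := ∀ v : V, ∃ u ∈ S, G.Adj u v

/-- The domination number `γ(G)`. -/
noncomputable def domNum (G : SimpleGraph V) : ℕ :=
  sInf {n | ∃ S : Set V, IsDomSet G S ∧ S.ncard = n}

/-- The total domination number `γₜ(G)`. -/
noncomputable def totalDomNum (G : SimpleGraph V) : ℕ :=
  sInf {n | ∃ S : Set V, IsTotalDomSet G S ∧ S.ncard = n}

/-- A minimum dominating set (γ-set). -/
def IsMinDomSet (G : SimpleGraph V) (S : Set V) : Prop := IsDomSet G S ∧ S.ncard = domNum G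

/-- `S` is a packing: closed neighborhoods of distinct members are disjoint. -/
def IsPacking (G : SimpleGraph V) (S : Set V) : Prop :=
  S.Pairwise fun u v => Disjoint (cnbr G u) (cnbr G v)

/-- `M(v)`: neighbors of `v` having a neighbor outside `N[v]`. -/
def Mset (G : SimpleGraph V) (v : V) : Set V :=
  {u | G.Adj v u ∧ ∃ w, G.Adj u w ∧ w ∉ cnbr G v}

/-- `D(v)`: neighbors `u` of `v` that are not true twins of `v` with `N[u] ⊆ N[v]`. -/
def Dset (G : SimpleGraph V) (v : V) : Set V :=
  {u | G.Adj v u ∧ cnbr G u ≠ cnbr G v ∧ cnbr G u ⊆ cnbr G v}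

/-- `T(v)`: `v` together with its true twins. -/
def Tset (G : SimpleGraph V) (v : V) : Set V := {u | cnbr G u = cnbr G v}

/-- A non-isolated vertex `v` is special if no `u ∈ M(v)` satisfies `D(v) ⊆ N(u)`. -/
def Special (G : SimpleGraph V) (v : V) : Prop :=
  (G.neighborSet v).Nonempty ∧ ¬ ∃ u ∈ Mset G v, Dset G v ⊆ G.neighborSet u

/-- An `S(G)`-set: a set of special vertices containing exactly one vertex from each
true-twin equivalence class of special vertices. -/
def IsSGSet (G : SimpleGraph V) (S : Set V) : Prop :=
  (∀ u ∈ S, Special G u) ∧ ∀ v, Special G v → ∃! u, u ∈ S ∧ u ∈ Tset G v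

/-- `G` has no isolated vertices. -/
def NoIsolated (G : SimpleGraph V) : Prop := ∀ v : V, ∃ u, G.Adj v u

/-- `G` contains no induced copy of `H`. -/
def Free {α : Type*} (H : SimpleGraph α) (G : SimpleGraph V) : Prop := IsEmpty (H ↪g G)

/-- `H₁`: a 6-cycle plus one chord between vertices at distance two along the cycle. -/
def H1 : SimpleGraph (Fin 6) := cycleGraph 6 ⊔ fromEdgeSet {s(0, 2)}

/-- `H₂`: a 6-cycle `x₁x₂x₃x₄x₅x₆` plus the chords `x₂x₆` and `x₃x₅`. -/
def H2 : SimpleGraph (Fin 6) := cycleGraph 6 ⊔ fromEdgeSet {s(1, 5), s(2, 4)}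

/-- A leaf: a vertex of degree one. -/
def IsLeaf (G : SimpleGraph V) (v : V) : Prop := ∃! u, G.Adj v u

/-- A support vertex: a vertex adjacent to a leaf. -/
def IsSupport (G : SimpleGraph V) (v : V) : Prop := ∃ u, G.Adj v u ∧ IsLeaf G u

/-- `sup(G)`: the set of support vertices. -/
def supSet (G : SimpleGraph V) : Set V := {v | IsSupport G v}

variable {G : SimpleGraph V}

theorem mem_cnbr {u v : V} : u ∈ cnbr G v ↔ u = v ∨ G.Adj v u := Iff.rfl

theorem self_mem_cnbr (v : V) : v ∈ cnbr G v := Set.mem_insert v _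

theorem mem_cnbr_of_adj {u v : V} (h : G.Adj v u) : u ∈ cnbr G v := Set.mem_insert_of_mem v h

theorem adj_of_mem_cnbr {u v : V} (h : u ∈ cnbr G v) (hne : u ≠ v) : G.Adj v u :=
  (mem_cnbr.1 h).resolve_left hne

theorem mem_cnbr_comm {u v : V} : u ∈ cnbr G v ↔ v ∈ cnbr G u := by
  simp only [mem_cnbr, eq_comm, G.adj_comm]

theorem exists_forall_mem_of_chain {ι α : Type*} {s : Set ι} (hs : s.Finite) (hs₀ : s.Nonempty)
    {A : ι → Set α} (hA : ∀ i ∈ s, (A i).Nonempty)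
    (hchain : ∀ i ∈ s, ∀ j ∈ s, A i ⊆ A j ∨ A j ⊆ A i) : ∃ x, ∀ i ∈ s, x ∈ A i := by
  obtain ⟨i₀, hi₀, hmin⟩ := hs.exists_minimalFor A s hs₀
  obtain ⟨x, hx⟩ := hA i₀ hi₀
  exact ⟨x, fun i hi => (hchain i₀ hi₀ i hi).elim (· hx) fun h => hmin hi h hx⟩

theorem Free.false_of_adj_iff {α : Type*} {H : SimpleGraph α} (hfree : Free H G) (x : α → V)
    (hx : ∀ i j, G.Adj (x i) (x j) ↔ H.Adj i j)
    (hH : ∀ i j, (∀ k, H.Adj i k ↔ H.Adj j k) → i = j) : False :=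
  hfree.false ⟨⟨x, fun i j hij => hH i j fun k => by rw [← hx, ← hx, hij]⟩, hx _ _⟩

theorem false_of_hexagon (hH1 : Free H1 G) (hH2 : Free H2 G) (hC6 : Free (cycleGraph 6) G)
    {x₀ x₁ x₂ x₃ x₄ x₅ : V}
    (h01 : G.Adj x₀ x₁) (h12 : G.Adj x₁ x₂) (h23 : G.Adj x₂ x₃)
    (h34 : G.Adj x₃ x₄) (h45 : G.Adj x₄ x₅) (h50 : G.Adj x₅ x₀)
    (h02 : ¬G.Adj x₀ x₂) (h03 : ¬G.Adj x₀ x₃) (h04 : ¬G.Adj x₀ x₄) (h13 : ¬G.Adj x₁ x₃)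
    (h14 : ¬G.Adj x₁ x₄) (h25 : ¬G.Adj x₂ x₅) (h35 : ¬G.Adj x₃ x₅) : False := by
  -- the chords `x₁x₅` and `x₂x₄` decide which of `H₂`, `H₁`, `H₁`, `C₆` is induced
  by_cases h15 : G.Adj x₁ x₅ <;> by_cases h24 : G.Adj x₂ x₄
  · refine hH2.false_of_adj_iff ![x₀, x₁, x₂, x₃, x₄, x₅] ?_ (by unfold H2; decide)
    intro i j
    fin_cases i <;> fin_cases j <;> simp_all [H2, G.adj_comm] <;> decide
  · refine hH1.false_of_adj_iff ![x₁, x₀, x₅, x₄, x₃, x₂] ?_ (by unfold H1; decide)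
    intro i j
    fin_cases i <;> fin_cases j <;> simp_all [H1, G.adj_comm] <;> decide
  · refine hH1.false_of_adj_iff ![x₂, x₃, x₄, x₅, x₀, x₁] ?_ (by unfold H1; decide)
    intro i j
    fin_cases i <;> fin_cases j <;> simp_all [H1, G.adj_comm] <;> decide
  · refine hC6.false_of_adj_iff ![x₀, x₁, x₂, x₃, x₄, x₅] ?_ (by decide)
    intro i j
    fin_cases i <;> fin_cases j <;> simp_all [G.adj_comm] <;> decide

theorem IsPacking.eq_of_mem_cnbr {D : Set V} (hD : IsPacking G D) {a b x : V} (ha : a ∈ D)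
    (hb : b ∈ D) (hxa : x ∈ cnbr G a) (hxb : x ∈ cnbr G b) : a = b :=
  by_contra fun hab => Set.disjoint_left.1 (hD ha hb hab) hxa hxb

theorem IsPacking.not_adj {D : Set V} (hD : IsPacking G D) {a b x : V} (ha : a ∈ D) (hb : b ∈ D)
    (hab : a ≠ b) (hxa : x ∈ cnbr G a) : ¬G.Adj b x :=
  fun hbx => hab (hD.eq_of_mem_cnbr ha hb hxa (mem_cnbr_of_adj hbx))

theorem IsPacking.neighborSet_inter_subset_or (hH1 : Free H1 G) (hH2 : Free H2 G)
    (hC6 : Free (cycleGraph 6) G) {D : Set V} (hD : IsPacking G D) {v σ μ μ' : V} (hv : v ∈ D)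
    (hσ : σ ∈ D) (hσv : σ ≠ v) (hμ : G.Adj v μ) (hμ' : G.Adj v μ') :
    G.neighborSet μ ∩ G.neighborSet σ ⊆ G.neighborSet μ' ∩ G.neighborSet σ ∨
      G.neighborSet μ' ∩ G.neighborSet σ ⊆ G.neighborSet μ ∩ G.neighborSet σ := by
  by_contra! h
  obtain ⟨x, ⟨hμx, hσx⟩, hxμ'⟩ := Set.not_subset.1 h.1
  obtain ⟨x', ⟨hμ'x', hσx'⟩, hx'μ⟩ := Set.not_subset.1 h.2
  exact false_of_hexagon hH1 hH2 hC6 hσx' hμ'x'.symm hμ'.symm hμ hμx hσx.symm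
    (hD.not_adj hv hσ hσv.symm (mem_cnbr_of_adj hμ'))
    (hD.not_adj hv hσ hσv.symm (self_mem_cnbr v))
    (hD.not_adj hv hσ hσv.symm (mem_cnbr_of_adj hμ))
    (fun h => hD.not_adj hσ hv hσv (mem_cnbr_of_adj hσx') h.symm)
    (fun h => hx'μ ⟨h.symm, hσx'⟩) (fun h => hxμ' ⟨h, hσx⟩)
    (hD.not_adj hσ hv hσv (mem_cnbr_of_adj hσx))

theorem IsPacking.exists_common_neighbor [Finite V] (hiso : NoIsolated G) (hH1 : Free H1 G)
    (hH2 : Free H2 G) (hC6 : Free (cycleGraph 6) G) {D : Set V} (hD : IsPacking G D)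
    {v σ : V} (hv : v ∈ D) (hσ : σ ∈ D) (hσv : σ ≠ v) :
    ∃ y, G.Adj σ y ∧ ∀ μ, G.Adj v μ → (∃ x, G.Adj μ x ∧ G.Adj σ x) → G.Adj μ y := by
  set s := {μ | G.Adj v μ ∧ (G.neighborSet μ ∩ G.neighborSet σ).Nonempty}
  rcases s.eq_empty_or_nonempty with hs | hs
  · obtain ⟨y, hy⟩ := hiso σ
    exact ⟨y, hy, fun μ hμ hμσ => (hs.subset ⟨hμ, hμσ⟩).elim⟩
  obtain ⟨x, hx⟩ := exists_forall_mem_of_chain (Set.toFinite s) hs (fun μ hμ => hμ.2)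
    fun μ hμ μ' hμ' => hD.neighborSet_inter_subset_or hH1 hH2 hC6 hv hσ hσv hμ.1 hμ'.1
  obtain ⟨μ₀, hμ₀⟩ := hs
  exact ⟨x, (hx μ₀ hμ₀).2, fun μ hμ hμσ => (hx μ ⟨hμ, hμσ⟩).1⟩

theorem IsDomSet.exists_mem_cnbr {D : Set V} (hD : IsDomSet G D) (z : V) :
    ∃ v ∈ D, z ∈ cnbr G v := by
  by_cases hz : z ∈ D
  · exact ⟨z, hz, self_mem_cnbr z⟩
  · obtain ⟨u, hu, huz⟩ := hD z hz
    exact ⟨u, hu, mem_cnbr_of_adj huz⟩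

theorem IsDomSet.domNum_le {S : Set V} (hS : IsDomSet G S) : domNum G ≤ S.ncard :=
  Nat.sInf_le ⟨S, hS, rfl⟩

theorem IsTotalDomSet.totalDomNum_le {T : Set V} (hT : IsTotalDomSet G T) :
    totalDomNum G ≤ T.ncard :=
  Nat.sInf_le ⟨T, hT, rfl⟩

theorem exists_isMinDomSet (G : SimpleGraph V) : ∃ D, IsMinDomSet G D :=
  Nat.sInf_mem (s := {n | ∃ S : Set V, IsDomSet G S ∧ S.ncard = n})
    ⟨_, Set.univ, fun _ hv => (hv trivial).elim, rfl⟩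

theorem IsMinDomSet.insert_sdiff_of_cnbr_eq [Finite V] {D : Set V} (hD : IsMinDomSet G D)
    {s w : V} (hw : w ∈ D) (hs : cnbr G s = cnbr G w) : IsMinDomSet G (insert s (D \ {w})) := by
  have hdom : IsDomSet G (insert s (D \ {w})) := by
    intro y hy
    by_cases hyw : y ∈ cnbr G w
    · have hys : y ≠ s := fun h => hy (h ▸ Set.mem_insert _ _)
      exact ⟨s, Set.mem_insert _ _, adj_of_mem_cnbr (hs ▸ hyw) hys⟩
    · have hyD : y ∉ D := fun h =>
        hy (Set.mem_insert_of_mem _ ⟨h, fun h' => hyw (h' ▸ self_mem_cnbr y)⟩)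
      obtain ⟨u, hu, huy⟩ := hD.1 y hyD
      have huw : u ≠ w := fun h => hyw (h ▸ mem_cnbr_of_adj huy)
      exact ⟨u, Set.mem_insert_of_mem _ ⟨hu, huw⟩, huy⟩
  refine ⟨hdom, le_antisymm ?_ hdom.domNum_le⟩
  calc (insert s (D \ {w})).ncard ≤ (D \ {w}).ncard + 1 := Set.ncard_insert_le _ _
    _ = domNum G := by rw [Set.ncard_sdiff_singleton_add_one hw, hD.2]

theorem IsDomSet.isTotalDomSet_union_image {D R X : Set V} (hD : IsDomSet G D) {f : V → V}
    (hf : ∀ σ ∈ D \ R, G.Adj σ (f σ))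
    (hR : ∀ r ∈ R, ∀ z ∈ cnbr G r, ∃ u ∈ D \ R ∪ X ∪ f '' (D \ R), G.Adj u z) :
    IsTotalDomSet G (D \ R ∪ X ∪ f '' (D \ R)) := by
  intro z
  obtain ⟨σ, hσ, hzσ⟩ := hD.exists_mem_cnbr z
  by_cases hσR : σ ∈ R
  · exact hR σ hσR z hzσ
  by_cases hzσ' : z = σ
  · exact ⟨f σ, Or.inr ⟨σ, ⟨hσ, hσR⟩, rfl⟩, hzσ' ▸ (hf σ ⟨hσ, hσR⟩).symm⟩
  · exact ⟨σ, Or.inl (Or.inl ⟨hσ, hσR⟩), adj_of_mem_cnbr hzσ hzσ'⟩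

theorem IsMinDomSet.false_of_isTotalDomSet [Finite V] (hγ : totalDomNum G = 2 * domNum G)
    {D R X : Set V} (hD : IsMinDomSet G D) (hRD : R ⊆ D) (hX : X.ncard < 2 * R.ncard)
    (f : V → V) (hT : IsTotalDomSet G (D \ R ∪ X ∪ f '' (D \ R))) : False := by
  have hcard : (D \ R ∪ X ∪ f '' (D \ R)).ncard ≤ (D \ R).ncard + X.ncard + (D \ R).ncard :=
    (Set.ncard_union_le _ _).trans
      (add_le_add (Set.ncard_union_le _ _) (Set.ncard_image_le (Set.toFinite _)))
  have hsplit := Set.ncard_sdiff_add_ncard_of_subset hRD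
  have := hT.totalDomNum_le
  have := hD.2
  omega

theorem IsMinDomSet.isPacking [Finite V] (hiso : NoIsolated G)
    (hγ : totalDomNum G = 2 * domNum G) {D : Set V} (hD : IsMinDomSet G D) : IsPacking G D := by
  intro v hv w hw hvw
  by_contra hnd
  obtain ⟨p, hpv, hpw⟩ := Set.not_disjoint_iff.1 hnd
  choose f hf using hiso
  have cover : ∀ a b, a ≠ b → p ∈ cnbr G a → p ∈ cnbr G b → ∀ z ∈ cnbr G a,
      ∃ u, (u = a ∨ u = b ∨ u = p) ∧ G.Adj u z := by
    intro a b hab hpa hpb z hz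
    by_cases hza : z = a
    · subst hza
      by_cases hpz : p = z
      · subst hpz
        exact ⟨b, Or.inr (Or.inl rfl), adj_of_mem_cnbr hpb hab⟩
      · exact ⟨p, Or.inr (Or.inr rfl), (adj_of_mem_cnbr hpa hpz).symm⟩
    · exact ⟨a, Or.inl rfl, adj_of_mem_cnbr hz hza⟩
  refine hD.false_of_isTotalDomSet hγ (R := {v, w}) (X := {v, w, p})
    (Set.insert_subset hv (Set.singleton_subset_iff.2 hw)) ?_ f
    (hD.1.isTotalDomSet_union_image (fun σ _ => hf σ) ?_)
  · rw [Set.ncard_pair hvw]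
    have := Set.ncard_insert_le v {w, p}
    have := Set.ncard_insert_le w {p}
    have := Set.ncard_singleton p
    omega
  · rintro r (rfl | rfl) z hz
    · obtain ⟨u, hu, huz⟩ := cover r w hvw hpv hpw z hz
      exact ⟨u, Or.inl (Or.inr (by rcases hu with rfl | rfl | rfl <;> simp)), huz⟩
    · obtain ⟨u, hu, huz⟩ := cover r v hvw.symm hpw hpv z hz
      exact ⟨u, Or.inl (Or.inr (by rcases hu with rfl | rfl | rfl <;> simp)), huz⟩

section Blocks

variable [Finite V] (hiso : NoIsolated G) (hγ : totalDomNum G = 2 * domNum G)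
include hiso hγ

theorem IsMinDomSet.cnbr_eq_of_cnbr_subset {D : Set V} (hD : IsMinDomSet G D) {v z : V}
    (hv : v ∈ D) (hvz : cnbr G v ⊆ cnbr G z) : cnbr G z = cnbr G v := by
  have hpD := hD.isPacking hiso hγ
  have hzv : z ∈ cnbr G v := mem_cnbr_comm.1 (hvz (self_mem_cnbr v))
  refine Set.Subset.antisymm (fun x hxz => ?_) hvz
  by_contra hxv
  have hzx : G.Adj z x := adj_of_mem_cnbr hxz fun h => hxv (h ▸ hzv)
  obtain ⟨w, hw, hxw⟩ := hD.1.exists_mem_cnbr x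
  have hwv : w ≠ v := fun h => hxv (h ▸ hxw)
  have hwx : G.Adj w x :=
    adj_of_mem_cnbr hxw fun h => hpD.not_adj hv hw hwv.symm hzv (h ▸ hzx.symm)
  choose f hf using hiso
  classical
  refine hD.false_of_isTotalDomSet hγ (R := {v}) (X := {z}) (Set.singleton_subset_iff.2 hv)
    (by simp) (Function.update f w x) (hD.1.isTotalDomSet_union_image ?_ ?_)
  · intro σ _
    by_cases hσw : σ = w
    · subst hσw
      simpa using hwx
    · simpa [hσw] using hf σ
  · rintro r rfl y hy
    by_cases hyz : y = z
    · exact ⟨x, Or.inr ⟨w, ⟨hw, hwv⟩, by simp⟩, hyz ▸ hzx.symm⟩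
    · exact ⟨z, Or.inl (Or.inr rfl), adj_of_mem_cnbr (hvz hy) hyz⟩

theorem IsMinDomSet.cnbr_eq_of_special {D : Set V} (hD : IsMinDomSet G D) {v z : V}
    (hv : v ∈ D) (hzv : z ∈ cnbr G v) (hz : Special G z) : cnbr G z = cnbr G v := by
  have hpD := hD.isPacking hiso hγ
  refine hD.cnbr_eq_of_cnbr_subset hiso hγ hv fun y hyv => ?_
  by_contra hyz
  have hvz : v ≠ z := fun h => hyz (h ▸ hyv)
  refine hz.2 ⟨v, ⟨(adj_of_mem_cnbr hzv fun h => hvz h.symm).symm, y,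
    adj_of_mem_cnbr hyv fun h => hyz (h ▸ mem_cnbr_comm.1 hzv), hyz⟩, ?_⟩
  rintro u ⟨-, -, huz⟩
  obtain ⟨c, hc, huc⟩ := hD.1.exists_mem_cnbr u
  have hcv : c = v := hpD.eq_of_mem_cnbr hc hv (mem_cnbr_comm.1 (huz (mem_cnbr_comm.1 huc))) hzv
  subst hcv
  exact adj_of_mem_cnbr huc fun h => hyz (huz (h ▸ hyv))

theorem IsMinDomSet.special_of_mem (hH1 : Free H1 G) (hH2 : Free H2 G)
    (hC6 : Free (cycleGraph 6) G) {D : Set V} (hD : IsMinDomSet G D) {v : V} (hv : v ∈ D) :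
    Special G v := by
  have hpD := hD.isPacking hiso hγ
  refine ⟨hiso v, ?_⟩
  rintro ⟨m, ⟨hvm, x₀, hmx₀, hx₀v⟩, hDm⟩
  choose! f hf hfμ using fun σ (hσ : σ ∈ D \ {v}) =>
    hpD.exists_common_neighbor hiso hH1 hH2 hC6 hv hσ.1 hσ.2
  refine hD.false_of_isTotalDomSet hγ (R := {v}) (X := {m}) (Set.singleton_subset_iff.2 hv)
    (by simp) f (hD.1.isTotalDomSet_union_image hf ?_)
  rintro r rfl z hz
  by_cases htwin : cnbr G z = cnbr G r
  · have hmz : m ∈ cnbr G z := htwin ▸ mem_cnbr_of_adj hvm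
    exact ⟨m, Or.inl (Or.inr rfl),
      (adj_of_mem_cnbr hmz fun h => hx₀v (htwin ▸ h ▸ mem_cnbr_of_adj hmx₀)).symm⟩
  have hrz : G.Adj r z := adj_of_mem_cnbr hz fun h => htwin (h ▸ rfl)
  by_cases hout : ∃ x, G.Adj z x ∧ x ∉ cnbr G r
  · obtain ⟨x, hzx, hxr⟩ := hout
    obtain ⟨σ, hσ, hxσ⟩ := hD.1.exists_mem_cnbr x
    have hσr : σ ≠ r := fun h => hxr (h ▸ hxσ)
    have hσx : G.Adj σ x :=
      adj_of_mem_cnbr hxσ fun h => hpD.not_adj hv hσ hσr.symm hz (h ▸ hzx).symm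
    exact ⟨f σ, Or.inr ⟨σ, ⟨hσ, hσr⟩, rfl⟩, (hfμ σ ⟨hσ, hσr⟩ z hrz ⟨x, hzx, hσx⟩).symm⟩
  · push Not at hout
    exact ⟨m, Or.inl (Or.inr rfl), hDm ⟨hrz, htwin, fun w hw =>
      (mem_cnbr.1 hw).elim (· ▸ hz) (hout w)⟩⟩

end Blocks

/-- An `(H₁,H₂,C₆)`-free graph `G` with no isolated vertices satisfying `γₜ(G) = 2γ(G)` has a
unique minimum dominating set iff no special vertex has a true twin other than itself. -/
theorem stmt9 {V : Type*} [Fintype V] (G : SimpleGraph V) (hiso : NoIsolated G)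
    (hH1 : Free H1 G) (hH2 : Free H2 G) (hC6 : Free (cycleGraph 6) G)
    (h : totalDomNum G = 2 * domNum G) :
    (∃! D : Set V, IsMinDomSet G D) ↔ ∀ v, Special G v → ∀ u ∈ Tset G v, u = v := by
  constructor
  · rintro ⟨D, hD, huniq⟩ z hz u hu
    by_contra hne
    obtain ⟨w, hw, hzw⟩ := hD.1.exists_mem_cnbr z
    have hzw' := hD.cnbr_eq_of_special hiso h hw hzw hz
    obtain ⟨s, hsw, hs⟩ : ∃ s, cnbr G s = cnbr G w ∧ s ≠ w := by
      by_cases hz' : z = w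
      · exact ⟨u, hu.trans hzw', hz' ▸ hne⟩
      · exact ⟨z, hzw', hz'⟩
    have hwD : w ∈ insert s (D \ {w}) := by
      rw [huniq _ (hD.insert_sdiff_of_cnbr_eq hw hsw)]
      exact hw
    simp [hs.symm] at hwD
  · intro hspecial
    obtain ⟨D, hD⟩ := exists_isMinDomSet G
    refine ⟨D, hD, fun D' hD' => ?_⟩
    have hDD' : D ⊆ D' := by
      intro v hv
      obtain ⟨u, hu, hvu⟩ := hD'.1.exists_mem_cnbr v
      have hv_special := hD.special_of_mem hiso h hH1 hH2 hC6 hv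
      have huv := hspecial v hv_special u (hD'.cnbr_eq_of_special hiso h hu hvu hv_special).symm
      exact huv ▸ hu
    exact (Set.eq_of_subset_of_ncard_le hDD' (hD'.2.trans hD.2.symm).le).symm

end TotalDom
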